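/- Let μ be a finite measure on a measurable space X and f a bounded measurable function, and let ψ^{[i]} be the (G-orthonormal) generalized eigenfunctions with eigenvalues λ^{[i]} of ⟨ψ, f φ⟩ = λ ⟨ψ, φ⟩ restricted to an n-dimensional subspace of L²(μ) containing the constant function 1. Then the Lebesgue quadrature ∑_{i=0}^{n-1} λ^{[i]} ⟨1, ψ^{[i]}⟩² reproduces ∫ f dμ exactly. -/

import Mathlib

/-!
Writing `1 = ∑ cⱼ ψⱼ`, orthonormality gives `∫ ψᵢ = cᵢ`. Expanding `∫ f = ∫ f · 1 · 1` bilinearly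
in the eigenbasis, the eigen-relations kill every off-diagonal term and leave `∑ λᵢ cᵢ²`.
-/

open MeasureTheory Finset

section

variable {X ι : Type*} [MeasurableSpace X] {μ : Measure X} [Fintype ι]

theorem integral_mul_sum_mul_sum (g : X → ℝ) (ψ : ι → X → ℝ) (a b : ι → ℝ)
    (h : ∀ i j, Integrable (fun x => g x * ψ i x * ψ j x) μ) :
    ∫ x, g x * (∑ i, a i * ψ i x) * (∑ j, b j * ψ j x) ∂μ
      = ∑ i, ∑ j, a i * b j * ∫ x, g x * ψ i x * ψ j x ∂μ := by
  have expand : ∀ x, g x * (∑ i, a i * ψ i x) * (∑ j, b j * ψ j x)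
      = ∑ i, ∑ j, a i * b j * (g x * ψ i x * ψ j x) := by
    intro x
    rw [mul_assoc, sum_mul_sum, mul_sum]
    exact sum_congr rfl fun i _ => by rw [mul_sum]; exact sum_congr rfl fun j _ => by ring
  simp only [expand]
  rw [integral_finsetSum _ fun i _ => integrable_finsetSum _ fun j _ => (h i j).const_mul _]
  refine sum_congr rfl fun i _ => ?_
  rw [integral_finsetSum _ fun j _ => (h i j).const_mul _]
  simp only [integral_const_mul]

theorem integral_eq_coeff_of_orthonormal [DecidableEq ι] {ψ : ι → X → ℝ} {c : ι → ℝ}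
    (hint2 : ∀ i j, Integrable (fun x => ψ i x * ψ j x) μ)
    (horth : ∀ i j, ∫ x, ψ i x * ψ j x ∂μ = if i = j then 1 else 0)
    (hone : ∀ x, (1 : ℝ) = ∑ j, c j * ψ j x) (i : ι) :
    ∫ x, ψ i x ∂μ = c i := by
  calc ∫ x, ψ i x ∂μ = ∫ x, ∑ j, c j * (ψ i x * ψ j x) ∂μ := by
        refine integral_congr_ae (.of_forall fun x => ?_)
        simp only [mul_left_comm _ (ψ i x), ← mul_sum, ← hone x, mul_one]
    _ = c i := by
        rw [integral_finsetSum _ fun j _ => (hint2 i j).const_mul _]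
        simp [integral_const_mul, horth]

end

theorem stmt_11_general {X : Type*} [MeasurableSpace X] (μ : Measure X)
    {n : ℕ} (f : X → ℝ) (hf : Measurable f) (C : ℝ) (hfb : ∀ x, |f x| ≤ C)
    (ψ : Fin n → X → ℝ) (lam : Fin n → ℝ)
    (hint2 : ∀ i j, Integrable (fun x => ψ i x * ψ j x) μ)
    (horth : ∀ i j, ∫ x, ψ i x * ψ j x ∂μ = if i = j then 1 else 0)
    (c : Fin n → ℝ) (hone : ∀ x, (1 : ℝ) = ∑ i, c i * ψ i x)
    (heig : ∀ i j, ∫ x, f x * ψ i x * ψ j x ∂μ = lam i * ∫ x, ψ i x * ψ j x ∂μ) :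
    ∑ i, lam i * (∫ x, ψ i x ∂μ) ^ 2 = ∫ x, f x ∂μ := by
  have hfint : ∀ i j, Integrable (fun x => f x * ψ i x * ψ j x) μ := fun i j => by
    simpa only [mul_assoc] using (hint2 i j).bdd_mul (c := C) hf.aestronglyMeasurable
      (.of_forall fun x => by simpa using hfb x)
  symm
  calc ∫ x, f x ∂μ = ∫ x, f x * (∑ i, c i * ψ i x) * (∑ j, c j * ψ j x) ∂μ := by
        simp only [← hone, mul_one]
    _ = ∑ i, ∑ j, c i * c j * (lam i * if i = j then 1 else 0) := by
        simp only [integral_mul_sum_mul_sum f ψ c c hfint, heig, horth]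
    _ = ∑ i, lam i * (∫ x, ψ i x ∂μ) ^ 2 := by
        simp [integral_eq_coeff_of_orthonormal hint2 horth hone, sq, mul_comm]

theorem stmt_11 {X : Type*} [MeasurableSpace X] (μ : Measure X) [IsFiniteMeasure μ]
    {n : ℕ} (f : X → ℝ) (hf : Measurable f) (C : ℝ) (hfb : ∀ x, |f x| ≤ C)
    (ψ : Fin n → X → ℝ) (lam : Fin n → ℝ)
    (hmeas : ∀ i, Measurable (ψ i))
    (hint : ∀ i, Integrable (ψ i) μ)
    (hint2 : ∀ i j, Integrable (fun x => ψ i x * ψ j x) μ)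
    (horth : ∀ i j, ∫ x, ψ i x * ψ j x ∂μ = if i = j then 1 else 0)
    (c : Fin n → ℝ) (hone : ∀ x, (1 : ℝ) = ∑ i, c i * ψ i x)
    (heig : ∀ i j, ∫ x, f x * ψ i x * ψ j x ∂μ = lam i * ∫ x, ψ i x * ψ j x ∂μ) :
    ∑ i, lam i * (∫ x, ψ i x ∂μ) ^ 2 = ∫ x, f x ∂μ :=
  stmt_11_general μ f hf C hfb ψ lam hint2 horth c hone heig
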